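/- arXiv:2106.06264 — 9 statements merged into one kernel-verified Lean document; each statement's English description precedes it below -/
import Mathlib

section
/- Fix an integer k ≥ 0. For every fixed z ≥ 1, the functions x ↦ L(x,z), x ↦ LB_k(x,z) and x ↦ UB_k(x,z) are nonincreasing on (0,∞); and for every fixed x > 0, the functions z ↦ L(x,z), z ↦ LB_k(x,z) and z ↦ UB_k(x,z) are nondecreasing on [1,∞). -/
open Real

/-- `L x z = z + log(1 + 1/x)`. -/
noncomputable def L (x z : ℝ) : ℝ := z + Real.log (1 + x⁻¹)

/-- `LB k x z = Σ_{j=0}^k ((1/2) log L(x,z))^j / j!`. -/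
noncomputable def LB (k : ℕ) (x z : ℝ) : ℝ :=
  ∑ j ∈ Finset.range (k + 1), ((1 / 2 : ℝ) * Real.log (L x z)) ^ j / (Nat.factorial j)

/-- `UB k x z = L(x,z) / LB_k(x,z)`. -/
noncomputable def UB (k : ℕ) (x z : ℝ) : ℝ := L x z / LB k x z


noncomputable def Pk (k : ℕ) (t : ℝ) : ℝ := ∑ j ∈ Finset.range (k+1), t ^ j / (Nat.factorial j)

lemma Pk_pos (k : ℕ) {t : ℝ} (ht : 0 ≤ t) : 0 < Pk k t := by
  unfold Pk
  apply Finset.sum_pos' (fun j _ => by positivity)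
  exact ⟨0, Finset.mem_range.2 (Nat.succ_pos k), by norm_num⟩

lemma Pk_mono (k : ℕ) {s t : ℝ} (hs : 0 ≤ s) (hst : s ≤ t) : Pk k s ≤ Pk k t := by
  unfold Pk
  gcongr with j hj


lemma Pk_deriv (k : ℕ) (t : ℝ) :
    HasDerivAt (Pk k) (∑ j ∈ Finset.range k, t ^ j / (Nat.factorial j)) t := by
  have h : HasDerivAt (fun t : ℝ => ∑ j ∈ Finset.range (k+1), t ^ j / (Nat.factorial j))
      (∑ j ∈ Finset.range (k+1), ((j : ℝ) * t ^ (j-1)) / (Nat.factorial j)) t := by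
    apply HasDerivAt.fun_sum
    intro j hj
    simpa using (hasDerivAt_pow j t).div_const (Nat.factorial j)
  convert h using 1
  · rfl
  rw [Finset.sum_range_succ']
  simp only [Nat.cast_zero, zero_mul, Nat.factorial_zero, Nat.cast_one, zero_div, add_zero]
  apply Finset.sum_congr rfl
  intro i _
  have h1 : ((i+1).factorial : ℝ) = (i+1) * i.factorial := by
    rw [Nat.factorial_succ]; push_cast; ring
  rw [h1]
  have h2 : (0:ℝ) < i.factorial := by positivity
  simp only [Nat.add_sub_cancel]
  field_simp
  push_cast
  ring

lemma Pk_exp_antitone (k : ℕ) : AntitoneOn (fun t => Real.exp (-t) * Pk k t) (Set.Ici (0:ℝ)) := by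
  have hg : ∀ t : ℝ, HasDerivAt (fun t => Real.exp (-t) * Pk k t)
      (Real.exp (-t) * (∑ j ∈ Finset.range k, t ^ j / (Nat.factorial j)) - Real.exp (-t) * Pk k t) t := by
    intro t
    have h1 : HasDerivAt (fun t : ℝ => Real.exp (-t)) (-Real.exp (-t)) t := by
      simpa using (hasDerivAt_neg t).exp
    have h2 := h1.mul (Pk_deriv k t)
    convert h2 using 1
    · rfl
    · rfl
    · rfl
    ring
  apply antitoneOn_of_deriv_nonpos (convex_Ici 0)
  · exact (Continuous.mul (Real.continuous_exp.comp continuous_neg)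
      (continuous_finset_sum _ fun j _ => (continuous_pow j).div_const _)).continuousOn
  · intro t ht
    exact (hg t).differentiableAt.differentiableWithinAt
  · intro t ht
    rw [(hg t).deriv]
    have htpos : (0:ℝ) < t := by simpa [interior_Ici] using ht
    have hle : (∑ j ∈ Finset.range k, t ^ j / (Nat.factorial j)) ≤ Pk k t := by
      unfold Pk
      rw [Finset.sum_range_succ]
      have : (0:ℝ) ≤ t ^ k / (Nat.factorial k) := by positivity
      linarith
    have := mul_le_mul_of_nonneg_left hle (Real.exp_pos (-t)).le
    linarith

lemma Pk_key (k : ℕ) {s t : ℝ} (hs : 0 ≤ s) (hst : s ≤ t) :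
    Pk k t ≤ Real.exp (t - s) * Pk k s := by
  have h := Pk_exp_antitone k (Set.mem_Ici.2 hs) (Set.mem_Ici.2 (hs.trans hst)) hst
  calc Pk k t = Real.exp t * (Real.exp (-t) * Pk k t) := by
        rw [← mul_assoc, ← Real.exp_add]; simp
    _ ≤ Real.exp t * (Real.exp (-s) * Pk k s) :=
        mul_le_mul_of_nonneg_left h (Real.exp_pos t).le
    _ = Real.exp (t - s) * Pk k s := by
        rw [← mul_assoc, ← Real.exp_add]; ring_nf

lemma ub_key (k : ℕ) {A B : ℝ} (hA : 1 ≤ A) (hAB : A ≤ B) :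
    A / Pk k ((1/2) * Real.log A) ≤ B / Pk k ((1/2) * Real.log B) := by
  set s := (1/2 : ℝ) * Real.log A with hsdef
  set t := (1/2 : ℝ) * Real.log B with htdef
  have hApos : (0:ℝ) < A := lt_of_lt_of_le one_pos hA
  have hBpos : (0:ℝ) < B := lt_of_lt_of_le hApos hAB
  have hs : 0 ≤ s := mul_nonneg (by norm_num) (Real.log_nonneg hA)
  have hst : s ≤ t := by
    have := Real.log_le_log hApos hAB
    rw [hsdef, htdef]; linarith
  have ht : 0 ≤ t := hs.trans hst
  rw [div_le_div_iff₀ (Pk_pos k hs) (Pk_pos k ht)]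
  have hA' : A = Real.exp (2*s) := by
    rw [hsdef]; rw [show 2 * ((1/2:ℝ) * Real.log A) = Real.log A by ring, Real.exp_log hApos]
  have hB' : B = Real.exp (2*t) := by
    rw [htdef]; rw [show 2 * ((1/2:ℝ) * Real.log B) = Real.log B by ring, Real.exp_log hBpos]
  calc A * Pk k t ≤ A * (Real.exp (t - s) * Pk k s) :=
        mul_le_mul_of_nonneg_left (Pk_key k hs hst) hApos.le
    _ = (Real.exp (2*s) * Real.exp (t-s)) * Pk k s := by rw [← hA']; ring
    _ = Real.exp (s + t) * Pk k s := by rw [← Real.exp_add]; ring_nf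
    _ ≤ Real.exp (2*t) * Pk k s := by
        have h1 : Real.exp (s+t) ≤ Real.exp (2*t) := Real.exp_le_exp.2 (by linarith)
        exact mul_le_mul_of_nonneg_right h1 (Pk_pos k hs).le
    _ = B * Pk k s := by rw [← hB']

lemma LB_eq (k : ℕ) (x z : ℝ) : LB k x z = Pk k ((1/2) * Real.log (L x z)) := rfl

lemma one_le_L {x z : ℝ} (hx : 0 < x) (hz : 1 ≤ z) : 1 ≤ L x z := by
  unfold L
  have : 0 ≤ Real.log (1 + x⁻¹) := Real.log_nonneg (by have := (inv_pos.2 hx).le; linarith)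
  linarith

theorem stmt_0 (k : ℕ) :
    (∀ z : ℝ, 1 ≤ z → ∀ x y : ℝ, 0 < x → x ≤ y →
      L y z ≤ L x z ∧ LB k y z ≤ LB k x z ∧ UB k y z ≤ UB k x z) ∧
    (∀ x : ℝ, 0 < x → ∀ z w : ℝ, 1 ≤ z → z ≤ w →
      L x z ≤ L x w ∧ LB k x z ≤ LB k x w ∧ UB k x z ≤ UB k x w) := by
  have main : ∀ (A B : ℝ), 1 ≤ A → A ≤ B →
      Pk k ((1/2) * Real.log A) ≤ Pk k ((1/2) * Real.log B) ∧
      A / Pk k ((1/2) * Real.log A) ≤ B / Pk k ((1/2) * Real.log B) := by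
    intro A B hA hAB
    have hApos : (0:ℝ) < A := lt_of_lt_of_le one_pos hA
    constructor
    · apply Pk_mono k (mul_nonneg (by norm_num) (Real.log_nonneg hA))
      have := Real.log_le_log hApos hAB
      linarith
    · exact ub_key k hA hAB
  constructor
  · intro z hz x y hx hxy
    have hy : 0 < y := lt_of_lt_of_le hx hxy
    have hL : L y z ≤ L x z := by
      unfold L
      have h1 : (1:ℝ) + y⁻¹ ≤ 1 + x⁻¹ := by
        have := inv_anti₀ hx hxy
        linarith
      have := Real.log_le_log (by positivity) h1
      linarith
    have h1y : 1 ≤ L y z := one_le_L hy hz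
    obtain ⟨hLB, hUB⟩ := main (L y z) (L x z) h1y hL
    exact ⟨hL, by rw [LB_eq, LB_eq]; exact hLB, by unfold UB; rw [LB_eq, LB_eq]; exact hUB⟩
  · intro x hx z w hz hzw
    have hL : L x z ≤ L x w := by unfold L; linarith
    have h1z : 1 ≤ L x z := one_le_L hx hz
    obtain ⟨hLB, hUB⟩ := main (L x z) (L x w) h1z hL
    exact ⟨hL, by rw [LB_eq, LB_eq]; exact hLB, by unfold UB; rw [LB_eq, LB_eq]; exact hUB⟩
end

section
/- For every integer k ≥ 0, every x > 0 and every z ≥ 1, one has 1 ≤ √z ≤ √(L(x,z)) ≤ UB_k(x,z) ≤ L(x,z). -/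
open Real

theorem stmt_2 (k : ℕ) (x z : ℝ) (hx : 0 < x) (hz : 1 ≤ z) :
    1 ≤ Real.sqrt z ∧ Real.sqrt z ≤ Real.sqrt (L x z) ∧
    Real.sqrt (L x z) ≤ UB k x z ∧ UB k x z ≤ L x z := by
  have hlog0 : 0 ≤ Real.log (1 + x⁻¹) := by
    apply Real.log_nonneg
    have : 0 < x⁻¹ := inv_pos.mpr hx
    linarith
  have hzL : z ≤ L x z := by simp [L]; linarith
  have hL1 : 1 ≤ L x z := le_trans hz hzL
  have hLpos : 0 < L x z := lt_of_lt_of_le one_pos hL1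
  have hlogL : 0 ≤ Real.log (L x z) := Real.log_nonneg hL1
  have harg : 0 ≤ (1 / 2 : ℝ) * Real.log (L x z) := by positivity
  -- 1 ≤ LB
  have hLB1 : 1 ≤ LB k x z := by
    unfold LB
    have := Finset.single_le_sum (f := fun j =>
        ((1 / 2 : ℝ) * Real.log (L x z)) ^ j / (Nat.factorial j))
      (fun j _ => by positivity) (Finset.mem_range.mpr (Nat.succ_pos k))
    simpa using this
  have hLBpos : 0 < LB k x z := lt_of_lt_of_le one_pos hLB1
  -- LB ≤ sqrt L
  have hsqrt : Real.sqrt (L x z) = Real.exp ((1 / 2 : ℝ) * Real.log (L x z)) := by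
    rw [Real.sqrt_eq_rpow, Real.rpow_def_of_pos hLpos]
    ring_nf
  have hLBle : LB k x z ≤ Real.sqrt (L x z) := by
    rw [hsqrt]
    exact Real.sum_le_exp_of_nonneg harg (k + 1)
  refine ⟨Real.one_le_sqrt.mpr hz, Real.sqrt_le_sqrt hzL, ?_, ?_⟩
  · rw [UB, le_div_iff₀ hLBpos]
    calc Real.sqrt (L x z) * LB k x z ≤ Real.sqrt (L x z) * Real.sqrt (L x z) := by
          exact mul_le_mul_of_nonneg_left hLBle (Real.sqrt_nonneg _)
      _ = L x z := Real.mul_self_sqrt hLpos.le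
  · rw [UB, div_le_iff₀ hLBpos]
    nlinarith
end

section
/- For every integer k ≥ 0, every z ≥ 1 and all real numbers 0 < a < b, one has ∫_a^b dx / ((x² + x)·LB_k(x,z)) ≤ 2·(UB_k(a,z) − UB_k(b,z)). -/
open Real

/-- partial sum -/
noncomputable def Spart (m : ℕ) (x z : ℝ) : ℝ :=
  ∑ j ∈ Finset.range m, ((1 / 2 : ℝ) * Real.log (L x z)) ^ j / (Nat.factorial j)

lemma LB_eq_Spart (k : ℕ) (x z : ℝ) : LB k x z = Spart (k + 1) x z := rfl

lemma L_pos {x z : ℝ} (hx : 0 < x) (hz : 1 ≤ z) : 0 < L x z :=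
  lt_of_lt_of_le one_pos (one_le_L hx hz)

lemma u_nonneg {x z : ℝ} (hx : 0 < x) (hz : 1 ≤ z) :
    0 ≤ (1 / 2 : ℝ) * Real.log (L x z) := by
  have := Real.log_nonneg (one_le_L hx hz); linarith

lemma Spart_nonneg (m : ℕ) {x z : ℝ} (hx : 0 < x) (hz : 1 ≤ z) :
    0 ≤ Spart m x z := by
  apply Finset.sum_nonneg
  intro j _
  have := u_nonneg hx hz
  positivity

lemma one_le_LB (k : ℕ) {x z : ℝ} (hx : 0 < x) (hz : 1 ≤ z) : 1 ≤ LB k x z := by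
  unfold LB
  rw [Finset.sum_range_succ']
  have h1 : (((1 / 2 : ℝ) * Real.log (L x z)) ^ 0 / (Nat.factorial 0) : ℝ) = 1 := by simp
  have h2 : 0 ≤ ∑ j ∈ Finset.range k,
      ((1 / 2 : ℝ) * Real.log (L x z)) ^ (j + 1) / (Nat.factorial (j + 1)) := by
    apply Finset.sum_nonneg
    intro j _
    have := u_nonneg hx hz
    positivity
  rw [h1]; linarith

lemma LB_pos (k : ℕ) {x z : ℝ} (hx : 0 < x) (hz : 1 ≤ z) : 0 < LB k x z :=
  lt_of_lt_of_le one_pos (one_le_LB k hx hz)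

lemma Spart_le_LB (k : ℕ) {x z : ℝ} (hx : 0 < x) (hz : 1 ≤ z) :
    Spart k x z ≤ LB k x z := by
  unfold LB Spart
  rw [Finset.sum_range_succ]
  have := u_nonneg hx hz
  have h : 0 ≤ ((1 / 2 : ℝ) * Real.log (L x z)) ^ k / (Nat.factorial k) := by positivity
  linarith

lemma hasDerivAt_L {x : ℝ} (z : ℝ) (hx : 0 < x) :
    HasDerivAt (fun x => L x z) (-(x ^ 2 + x)⁻¹) x := by
  have h1 : (1 : ℝ) + x⁻¹ ≠ 0 := by positivity
  have hinv : HasDerivAt (fun y : ℝ => (1 : ℝ) + y⁻¹) (-(x ^ 2)⁻¹) x := by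
    simpa using (hasDerivAt_inv (ne_of_gt hx)).const_add (1 : ℝ)
  have hlog := hinv.log h1
  have := hlog.const_add z
  refine this.congr_deriv ?_
  have hx2 : (x:ℝ) ^ 2 ≠ 0 := by positivity
  have hx2x : x ^ 2 + x ≠ 0 := by positivity
  field_simp

lemma hasDerivAt_u {x : ℝ} (z : ℝ) (hx : 0 < x) (hz : 1 ≤ z) :
    HasDerivAt (fun x => (1 / 2 : ℝ) * Real.log (L x z))
      ((1 / 2 : ℝ) * (-(x ^ 2 + x)⁻¹ / L x z)) x := by
  have hL := hasDerivAt_L z hx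
  have hLne := (L_pos hx hz).ne'
  exact ((hL.log hLne)).const_mul (1 / 2 : ℝ)

lemma hasDerivAt_Spart (m : ℕ) {x : ℝ} (z : ℝ) (hx : 0 < x) (hz : 1 ≤ z) :
    HasDerivAt (fun x => Spart m x z)
      (Spart (m - 1) x z * ((1 / 2 : ℝ) * (-(x ^ 2 + x)⁻¹ / L x z))) x := by
  cases m with
  | zero =>
      simp only [Spart, Finset.range_zero, Finset.sum_empty]
      simpa using (hasDerivAt_const x (0:ℝ))
  | succ n =>
      have hu := hasDerivAt_u z hx hz
      set u' := (1 / 2 : ℝ) * (-(x ^ 2 + x)⁻¹ / L x z) with hu'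
      have h : HasDerivAt (fun x => Spart (n + 1) x z)
          (∑ j ∈ Finset.range (n + 1),
            ((j : ℝ) * ((1 / 2 : ℝ) * Real.log (L x z)) ^ (j - 1) * u') / (Nat.factorial j)) x := by
        apply HasDerivAt.fun_sum
        intro j _
        exact (hu.pow j).div_const _
      convert h using 1
      rw [Finset.sum_range_succ']
      simp only [Nat.cast_zero, zero_mul, pow_zero, Nat.factorial_zero, Nat.cast_one,
        zero_div, add_zero, Nat.add_sub_cancel]
      rw [Spart, Finset.sum_mul]
      apply Finset.sum_congr rfl
      intro j _
      have hfac : ((Nat.factorial j : ℝ)) ≠ 0 := Nat.cast_ne_zero.mpr (Nat.factorial_ne_zero j)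
      have hfac' : ((Nat.factorial (j+1) : ℝ)) ≠ 0 := Nat.cast_ne_zero.mpr (Nat.factorial_ne_zero _)
      rw [Nat.factorial_succ]
      push_cast
      field_simp

lemma hasDerivAt_LB (k : ℕ) {x : ℝ} (z : ℝ) (hx : 0 < x) (hz : 1 ≤ z) :
    HasDerivAt (fun x => LB k x z)
      (Spart k x z * ((1 / 2 : ℝ) * (-(x ^ 2 + x)⁻¹ / L x z))) x := by
  have h := hasDerivAt_Spart (k + 1) z hx hz
  simpa [LB_eq_Spart] using h

/-- derivative of `-2 * UB` -/
lemma hasDerivAt_neg_two_UB (k : ℕ) {x : ℝ} (z : ℝ) (hx : 0 < x) (hz : 1 ≤ z) :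
    HasDerivAt (fun x => -2 * UB k x z)
      ((x ^ 2 + x)⁻¹ * (2 * LB k x z - Spart k x z) / (LB k x z) ^ 2) x := by
  have hL := hasDerivAt_L z hx
  have hLB := hasDerivAt_LB k z hx hz
  have hLBne := (LB_pos k hx hz).ne'
  have hdiv := (hL.fun_div hLB hLBne).const_mul (-2 : ℝ)
  have : (fun x => -2 * (L x z / LB k x z)) = fun x => -2 * UB k x z := by
    funext y; rw [UB]
  rw [this] at hdiv
  refine hdiv.congr_deriv ?_
  have hLne := (L_pos hx hz).ne'
  have hx2x : x ^ 2 + x ≠ 0 := by positivity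
  field_simp
  ring

theorem stmt_4 (k : ℕ) (z : ℝ) (hz : 1 ≤ z) (a b : ℝ) (ha : 0 < a) (hab : a < b) :
    ∫ x in a..b, ((x ^ 2 + x) * LB k x z)⁻¹ ≤
      2 * (UB k a z - UB k b z) := by
  have hposIcc : ∀ x ∈ Set.Icc a b, 0 < x := fun x hx => lt_of_lt_of_le ha hx.1
  set D : ℝ → ℝ := fun x => (x ^ 2 + x)⁻¹ * (2 * LB k x z - Spart k x z) / (LB k x z) ^ 2
    with hD
  have hderiv : ∀ x ∈ Set.Icc a b, HasDerivAt (fun x => -2 * UB k x z) (D x) x :=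
    fun x hx => hasDerivAt_neg_two_UB k z (hposIcc x hx) hz
  -- continuity
  have hcontD : ContinuousOn D (Set.Icc a b) := by
    apply continuousOn_of_forall_continuousAt
    intro x hx
    have hx0 := hposIcc x hx
    have hx2x : (0:ℝ) < x ^ 2 + x := by positivity
    have h1 : ContinuousAt (fun x : ℝ => (x ^ 2 + x)⁻¹) x :=
      (ContinuousAt.pow (continuousAt_id) 2 |>.add continuousAt_id).inv₀ hx2x.ne'
    have hLBc : ContinuousAt (fun x => LB k x z) x := (hasDerivAt_LB k z hx0 hz).continuousAt
    have hSc : ContinuousAt (fun x => Spart k x z) x :=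
      (hasDerivAt_Spart k z hx0 hz).continuousAt
    have hLBne : (LB k x z) ^ 2 ≠ 0 := pow_ne_zero 2 (LB_pos k hx0 hz).ne'
    exact (h1.mul ((continuousAt_const.mul hLBc).sub hSc)).div (hLBc.pow 2) hLBne
  have hcontg : ContinuousOn (fun x => ((x ^ 2 + x) * LB k x z)⁻¹) (Set.Icc a b) := by
    apply continuousOn_of_forall_continuousAt
    intro x hx
    have hx0 := hposIcc x hx
    have hx2x : (0:ℝ) < x ^ 2 + x := by positivity
    have hLBc : ContinuousAt (fun x => LB k x z) x := (hasDerivAt_LB k z hx0 hz).continuousAt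
    have hne : (x ^ 2 + x) * LB k x z ≠ 0 :=
      mul_ne_zero hx2x.ne' (LB_pos k hx0 hz).ne'
    exact (((continuousAt_id.pow 2).add continuousAt_id).mul hLBc).inv₀ hne
  have hDint : IntervalIntegrable D MeasureTheory.volume a b :=
    (hcontD.intervalIntegrable_of_Icc hab.le)
  have hgint : IntervalIntegrable (fun x => ((x ^ 2 + x) * LB k x z)⁻¹)
      MeasureTheory.volume a b := hcontg.intervalIntegrable_of_Icc hab.le
  have hle : ∀ x ∈ Set.Icc a b, ((x ^ 2 + x) * LB k x z)⁻¹ ≤ D x := by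
    intro x hx
    have hx0 := hposIcc x hx
    have hx2x : (0:ℝ) < x ^ 2 + x := by positivity
    have hLB := LB_pos k hx0 hz
    have hS := Spart_le_LB k hx0 hz
    have key : (LB k x z)⁻¹ ≤ (2 * LB k x z - Spart k x z) / (LB k x z) ^ 2 := by
      rw [inv_eq_one_div, div_le_div_iff₀ hLB (by positivity)]
      nlinarith
    rw [mul_inv]
    show _ ≤ (x ^ 2 + x)⁻¹ * (2 * LB k x z - Spart k x z) / LB k x z ^ 2
    rw [mul_div_assoc]
    exact mul_le_mul_of_nonneg_left key (by positivity)
  have hftc : ∫ x in a..b, D x = (-2 * UB k b z) - (-2 * UB k a z) := by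
    apply intervalIntegral.integral_eq_sub_of_hasDerivAt
    · intro x hx
      exact hderiv x (by rwa [Set.uIcc_of_le hab.le] at hx)
    · exact hDint
  calc ∫ x in a..b, ((x ^ 2 + x) * LB k x z)⁻¹
      ≤ ∫ x in a..b, D x := intervalIntegral.integral_mono_on hab.le hgint hDint hle
    _ = (-2 * UB k b z) - (-2 * UB k a z) := hftc
    _ = 2 * (UB k a z - UB k b z) := by ring
end

section
/- For every fixed z ≥ 1 and every x > 0: (i) ∂_x L(x,z) = −1/(x² + x); (ii) for every integer k ≥ 1, ∂_x LB_k(x,z) = −1/(2(x² + x)·UB_{k−1}(x,z)); (iii) for every integer k ≥ 0, ∂_x UB_k(x,z) = −(1/(2(x² + x)·LB_k(x,z)))·(1 + ((1/2)·log L(x,z))^k / (k!·LB_k(x,z))). -/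
open Real

theorem stmt_5 (z : ℝ) (hz : 1 ≤ z) (x : ℝ) (hx : 0 < x) :
    HasDerivAt (fun t => L t z) (-(1 / (x ^ 2 + x))) x ∧
    (∀ k : ℕ, 1 ≤ k →
      HasDerivAt (fun t => LB k t z) (-(1 / (2 * (x ^ 2 + x) * UB (k - 1) x z))) x) ∧
    (∀ k : ℕ,
      HasDerivAt (fun t => UB k t z)
        (-(1 / (2 * (x ^ 2 + x) * LB k x z)) *
          (1 + ((1 / 2 : ℝ) * Real.log (L x z)) ^ k / ((Nat.factorial k) * LB k x z))) x) := by
  have hx0 : x ≠ 0 := hx.ne'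
  have hP : (0:ℝ) < x ^ 2 + x := by positivity
  have hxi : (0:ℝ) < 1 + x⁻¹ := by positivity
  have hL1 : (1:ℝ) ≤ L x z := by
    have h1 : (1:ℝ) ≤ 1 + x⁻¹ := by
      have := inv_pos.mpr hx; linarith
    have : 0 ≤ Real.log (1 + x⁻¹) := Real.log_nonneg h1
    unfold L; linarith
  have hL0 : (0:ℝ) < L x z := lt_of_lt_of_le one_pos hL1
  have hu0 : 0 ≤ (1/2:ℝ) * Real.log (L x z) := by
    have := Real.log_nonneg hL1; linarith
  set u : ℝ := (1/2:ℝ) * Real.log (L x z) with hu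
  have hLB : ∀ k, 0 < LB k x z := by
    intro k
    unfold LB
    rw [← hu]
    apply Finset.sum_pos'
    · intro i _
      exact div_nonneg (pow_nonneg hu0 i) (by positivity)
    · exact ⟨0, Finset.mem_range.mpr (Nat.succ_pos k), by simp⟩
  -- derivative of L
  have hdL : HasDerivAt (fun t => L t z) (-(1 / (x ^ 2 + x))) x := by
    have h1 : HasDerivAt (fun t : ℝ => 1 + t⁻¹) (-(x^2)⁻¹) x := by
      simpa using (hasDerivAt_inv hx0).const_add (1:ℝ)
    have h2 := (h1.log hxi.ne').const_add z
    have hfun : (fun t => L t z) = fun t : ℝ => z + Real.log (1 + t⁻¹) := rfl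
    rw [hfun]
    refine h2.congr_deriv ?_
    field_simp
  set u' : ℝ := -(1/(2*(x^2+x)* L x z)) with hu'
  have hdu : HasDerivAt (fun t => (1/2 : ℝ) * Real.log (L t z)) u' x := by
    have h := (hdL.log hL0.ne').const_mul (1/2:ℝ)
    refine h.congr_deriv ?_
    rw [hu']
    field_simp
  -- derivative of LB k (for all k, including 0)
  have hdLB : ∀ k : ℕ, HasDerivAt (fun t => LB k t z)
      ((∑ j ∈ Finset.range k, u ^ j / (Nat.factorial j : ℝ)) * u') x := by
    intro k
    have hterm : ∀ j ∈ Finset.range (k+1), HasDerivAt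
        (fun t => ((1/2:ℝ) * Real.log (L t z)) ^ j / (Nat.factorial j : ℝ))
        (((j : ℝ) * u ^ (j-1) * u') / (Nat.factorial j : ℝ)) x := by
      intro j _
      exact (hdu.pow j).div_const _
    have hsum := HasDerivAt.fun_sum hterm
    have hfun : (fun t => LB k t z) = fun t => ∑ j ∈ Finset.range (k+1),
        ((1/2:ℝ) * Real.log (L t z)) ^ j / (Nat.factorial j : ℝ) := rfl
    rw [hfun]
    refine hsum.congr_deriv ?_
    rw [Finset.sum_range_succ', Finset.sum_mul]
    norm_num
    apply Finset.sum_congr rfl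
    intro i _
    have hfac : ((Nat.factorial i : ℝ)) ≠ 0 := Nat.cast_ne_zero.mpr (Nat.factorial_ne_zero i)
    rw [Nat.factorial_succ]
    push_cast
    field_simp
  refine ⟨hdL, ?_, ?_⟩
  · intro k hk
    have hk1 : k - 1 + 1 = k := Nat.succ_pred_eq_of_pos hk
    have hCB : (∑ j ∈ Finset.range k, u ^ j / (Nat.factorial j : ℝ)) = LB (k-1) x z := by
      unfold LB; rw [← hu, hk1]
    have hB := hLB (k-1)
    have heq : (∑ j ∈ Finset.range k, u ^ j / (Nat.factorial j : ℝ)) * u'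
        = -(1/(2*(x^2+x)* UB (k-1) x z)) := by
      rw [hCB, hu']
      unfold UB
      rw [div_eq_mul_inv]
      field_simp
    rw [← heq]
    exact hdLB k
  · intro k
    have hB := hLB k
    have hfac : ((Nat.factorial k : ℝ)) ≠ 0 := Nat.cast_ne_zero.mpr (Nat.factorial_ne_zero k)
    have hdiv := hdL.div (hdLB k) hB.ne'
    have hfun : (fun t => UB k t z) = fun t => L t z / LB k t z := rfl
    rw [hfun]
    refine hdiv.congr_deriv ?_
    have hBC : LB k x z = (∑ j ∈ Finset.range k, u ^ j / (Nat.factorial j : ℝ))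
        + u ^ k / (Nat.factorial k : ℝ) := by
      unfold LB; rw [← hu, Finset.sum_range_succ]
    have key : ∀ (P A B C E F : ℝ), P ≠ 0 → A ≠ 0 → B ≠ 0 → F ≠ 0 → E = F * (B - C) →
        -(1/(2*P*B)) * (1 + E/(F*B)) = (-(1/P) * B - A * (C * -(1/(2*P*A)))) / B^2 := by
      intro P A B C E F hPne hAne hBne hFne hE
      subst hE
      field_simp
      ring
    have hE : u ^ k = (Nat.factorial k : ℝ) * (LB k x z
        - ∑ j ∈ Finset.range k, u ^ j / (Nat.factorial j : ℝ)) := by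
      rw [hBC]
      field_simp
      ring
    rw [hu']
    exact (key (x^2+x) (L x z) (LB k x z) _ (u^k) (Nat.factorial k) hP.ne' hL0.ne' hB.ne'
      hfac hE).symm
end

section
/- Fix an integer k ≥ 1 and z ≥ 1, and let f denote either the function x ↦ LB_k(x,z) or the function x ↦ UB_k(x,z) on (0,∞). Then f takes values in [1,∞), f is nonincreasing, the function x ↦ L(x,z)/f(x) is nonincreasing, and for every x > 0 one has |f(x) + x·f'(x)| ≤ 2·f(x). -/
open Real

noncomputable def Qf (k : ℕ) (t : ℝ) : ℝ := ∑ j ∈ Finset.range k, t ^ j / (Nat.factorial j)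

lemma Qf_nonneg {k : ℕ} {t : ℝ} (ht : 0 ≤ t) : 0 ≤ Qf k t :=
  Finset.sum_nonneg fun j _ => div_nonneg (pow_nonneg ht j) (Nat.cast_nonneg _)

lemma Qf_one_le {k : ℕ} {t : ℝ} (hk : 1 ≤ k) (ht : 0 ≤ t) : 1 ≤ Qf k t := by
  obtain ⟨m, rfl⟩ := Nat.exists_eq_add_of_le hk
  have h : Qf (1 + m) t = Qf 1 t + ∑ j ∈ Finset.Ico 1 (1 + m), t ^ j / (Nat.factorial j) := by
    rw [Qf, Qf, ← Finset.sum_range_add_sum_Ico _ (by omega : 1 ≤ 1 + m)]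
  rw [h]
  have h1 : Qf 1 t = 1 := by simp [Qf]
  nlinarith [Finset.sum_nonneg (fun j (_ : j ∈ Finset.Ico 1 (1+m)) =>
    div_nonneg (pow_nonneg ht j) (Nat.cast_nonneg (Nat.factorial j) : (0:ℝ) ≤ Nat.factorial j))]

lemma Qf_mono_k {k : ℕ} {t : ℝ} (ht : 0 ≤ t) : Qf k t ≤ Qf (k+1) t := by
  apply Finset.sum_le_sum_of_subset_of_nonneg (Finset.range_subset_range.2 (Nat.le_succ k))
  exact fun j _ _ => div_nonneg (pow_nonneg ht j) (Nat.cast_nonneg _)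

lemma Qf_le_exp {k : ℕ} {t : ℝ} (ht : 0 ≤ t) : Qf k t ≤ Real.exp t :=
  Real.sum_le_exp_of_nonneg ht k

lemma Qf_hasDerivAt (k : ℕ) (t : ℝ) : HasDerivAt (Qf (k+1)) (Qf k t) t := by
  have h : ∀ j ∈ Finset.range (k+1), HasDerivAt (fun s : ℝ => s ^ j / (Nat.factorial j))
      ((j : ℝ) * t ^ (j-1) / (Nat.factorial j)) t := by
    intro j _
    simpa [div_eq_mul_inv] using (hasDerivAt_pow j t).div_const (Nat.factorial j : ℝ)
  have h2 := HasDerivAt.fun_sum h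
  convert h2 using 1
  · rfl
  · rfl
  · rfl
  rw [Finset.sum_range_succ' (fun j => (j : ℝ) * t ^ (j-1) / (Nat.factorial j)) k]
  simp [Qf, Nat.factorial_succ]
  apply Finset.sum_congr rfl
  intro j _
  field_simp

lemma L_one_le {z x : ℝ} (hz : 1 ≤ z) (hx : 0 < x) : 1 ≤ L x z := by
  have : 0 ≤ Real.log (1 + x⁻¹) := Real.log_nonneg (by nlinarith [inv_pos.2 hx])
  unfold L; linarith

lemma L_hasDerivAt {z x : ℝ} (hx : 0 < x) :
    HasDerivAt (fun x => L x z) (-(x * (x+1))⁻¹) x := by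
  have h1 : HasDerivAt (fun x : ℝ => 1 + x⁻¹) (-(x^2)⁻¹) x :=
    (hasDerivAt_inv hx.ne').const_add 1
  have h2 : (1 : ℝ) + x⁻¹ ≠ 0 := by
    have := inv_pos.2 hx; nlinarith
  have := (h1.log h2).const_add z
  convert this using 1
  · rfl
  · rfl
  · rfl
  field_simp

lemma LB_eq_Qf (k : ℕ) (x z : ℝ) : LB k x z = Qf (k+1) ((1/2 : ℝ) * Real.log (L x z)) := rfl

lemma LB_hasDerivAt {k : ℕ} {z x : ℝ} (hz : 1 ≤ z) (hx : 0 < x) :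
    HasDerivAt (fun x => LB k x z)
      (Qf k ((1/2 : ℝ) * Real.log (L x z)) * ((1/2) * (-(x * (x+1))⁻¹ / L x z))) x := by
  have hL1 : 1 ≤ L x z := L_one_le hz hx
  have hLpos : 0 < L x z := lt_of_lt_of_le one_pos hL1
  have hinner : HasDerivAt (fun x => (1/2 : ℝ) * Real.log (L x z))
      ((1/2) * (-(x * (x+1))⁻¹ / L x z)) x :=
    ((L_hasDerivAt hx).log hLpos.ne').const_mul (1/2)
  have houter := Qf_hasDerivAt k ((1/2 : ℝ) * Real.log (L x z))
  have := houter.comp x hinner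
  simpa [LB_eq_Qf, Function.comp_def] using this

lemma UB_hasDerivAt {k : ℕ} {z x : ℝ} (hk : 1 ≤ k) (hz : 1 ≤ z) (hx : 0 < x) :
    HasDerivAt (fun x => UB k x z)
      ((-(x * (x+1))⁻¹ * LB k x z -
        L x z * (Qf k ((1/2 : ℝ) * Real.log (L x z)) * ((1/2) * (-(x * (x+1))⁻¹ / L x z))))
        / (LB k x z)^2) x := by
  have hL1 : 1 ≤ L x z := L_one_le hz hx
  have ht : 0 ≤ (1/2 : ℝ) * Real.log (L x z) := by
    have := Real.log_nonneg hL1; linarith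
  have hP1 : 1 ≤ LB k x z := by
    rw [LB_eq_Qf]; exact Qf_one_le (by omega) ht
  exact (L_hasDerivAt hx).div (LB_hasDerivAt hz hx) (by linarith)

theorem stmt_6 (k : ℕ) (hk : 1 ≤ k) (z : ℝ) (hz : 1 ≤ z) (f : ℝ → ℝ)
    (hf : f = (fun x => LB k x z) ∨ f = (fun x => UB k x z)) :
    (∀ x : ℝ, 0 < x → 1 ≤ f x) ∧
    (∀ x y : ℝ, 0 < x → x ≤ y → f y ≤ f x) ∧
    (∀ x y : ℝ, 0 < x → x ≤ y → L y z / f y ≤ L x z / f x) ∧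
    (∀ x : ℝ, 0 < x → |f x + x * deriv f x| ≤ 2 * f x) := by
  -- basic pointwise facts
  have hL1 : ∀ x : ℝ, 0 < x → 1 ≤ L x z := fun x hx => L_one_le hz hx
  have ht : ∀ x : ℝ, 0 < x → 0 ≤ (1/2 : ℝ) * Real.log (L x z) := by
    intro x hx; have := Real.log_nonneg (hL1 x hx); linarith
  have hP1 : ∀ x : ℝ, 0 < x → 1 ≤ LB k x z := by
    intro x hx; rw [LB_eq_Qf]; exact Qf_one_le (by omega) (ht x hx)
  have hQ0 : ∀ x : ℝ, 0 < x → 0 ≤ Qf k ((1/2 : ℝ) * Real.log (L x z)) :=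
    fun x hx => Qf_nonneg (ht x hx)
  have hQP : ∀ x : ℝ, 0 < x →
      Qf k ((1/2 : ℝ) * Real.log (L x z)) ≤ LB k x z := by
    intro x hx; rw [LB_eq_Qf]; exact Qf_mono_k (ht x hx)
  have hPL : ∀ x : ℝ, 0 < x → LB k x z ≤ L x z := by
    intro x hx
    have h1 : LB k x z ≤ Real.exp ((1/2 : ℝ) * Real.log (L x z)) := by
      rw [LB_eq_Qf]; exact Qf_le_exp (ht x hx)
    have h2 : Real.exp ((1/2 : ℝ) * Real.log (L x z)) ≤ Real.exp (Real.log (L x z)) := by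
      apply Real.exp_le_exp.2
      have := Real.log_nonneg (hL1 x hx); linarith
    rw [Real.exp_log (by linarith [hL1 x hx])] at h2
    linarith
  have hUB1 : ∀ x : ℝ, 0 < x → 1 ≤ UB k x z := by
    intro x hx
    rw [UB, le_div_iff₀ (by linarith [hP1 x hx])]
    linarith [hPL x hx]
  -- inverse bound: 0 ≤ x * (x*(x+1))⁻¹ ≤ 1
  have hu : ∀ x : ℝ, 0 < x → 0 < (x * (x+1))⁻¹ := by
    intro x hx; apply inv_pos.2; nlinarith
  have hxu : ∀ x : ℝ, 0 < x → x * (x * (x+1))⁻¹ ≤ 1 := by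
    intro x hx
    rw [mul_inv, ← mul_assoc, mul_inv_cancel₀ hx.ne', one_mul]
    apply inv_le_one_of_one_le₀; linarith
  -- antitonicity of LB
  have hLBderiv_np : ∀ x : ℝ, 0 < x →
      Qf k ((1/2 : ℝ) * Real.log (L x z)) * ((1/2) * (-(x * (x+1))⁻¹ / L x z)) ≤ 0 := by
    intro x hx
    apply mul_nonpos_of_nonneg_of_nonpos (hQ0 x hx)
    have hLpos : (0:ℝ) < L x z := by linarith [hL1 x hx]
    have : -(x * (x+1))⁻¹ / L x z ≤ 0 :=
      div_nonpos_of_nonpos_of_nonneg (by linarith [hu x hx]) hLpos.le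
    linarith
  have hLBanti : AntitoneOn (fun x => LB k x z) (Set.Ioi 0) := by
    apply antitoneOn_of_deriv_nonpos (convex_Ioi 0)
    · exact fun x hx => ((LB_hasDerivAt hz hx).continuousAt).continuousWithinAt
    · intro x hx
      rw [interior_Ioi] at hx
      exact ((LB_hasDerivAt hz hx).differentiableAt).differentiableWithinAt
    · intro x hx
      rw [interior_Ioi] at hx
      rw [(LB_hasDerivAt hz hx).deriv]
      exact hLBderiv_np x hx
  -- antitonicity of UB
  have hUBderiv_np : ∀ x : ℝ, 0 < x →
      (-(x * (x+1))⁻¹ * LB k x z -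
        L x z * (Qf k ((1/2 : ℝ) * Real.log (L x z)) * ((1/2) * (-(x * (x+1))⁻¹ / L x z))))
        / (LB k x z)^2 ≤ 0 := by
    intro x hx
    apply div_nonpos_of_nonpos_of_nonneg _ (sq_nonneg _)
    have hLpos : (0:ℝ) < L x z := by linarith [hL1 x hx]
    have hrw : L x z * (Qf k ((1/2 : ℝ) * Real.log (L x z)) * ((1/2) * (-(x * (x+1))⁻¹ / L x z)))
        = -(x * (x+1))⁻¹ * (Qf k ((1/2 : ℝ) * Real.log (L x z)) / 2) := by
      field_simp
    rw [hrw]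
    have h1 := hu x hx
    have h2 := hQP x hx
    have h3 := hQ0 x hx
    have h4 := hP1 x hx
    nlinarith
  have hUBanti : AntitoneOn (fun x => UB k x z) (Set.Ioi 0) := by
    apply antitoneOn_of_deriv_nonpos (convex_Ioi 0)
    · exact fun x hx => ((UB_hasDerivAt hk hz hx).continuousAt).continuousWithinAt
    · intro x hx
      rw [interior_Ioi] at hx
      exact ((UB_hasDerivAt hk hz hx).differentiableAt).differentiableWithinAt
    · intro x hx
      rw [interior_Ioi] at hx
      rw [(UB_hasDerivAt hk hz hx).deriv]
      exact hUBderiv_np x hx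
  -- assemble
  rcases hf with rfl | rfl
  · refine ⟨fun x hx => hP1 x hx, ?_, ?_, ?_⟩
    · intro x y hx hxy
      exact hLBanti (Set.mem_Ioi.2 hx) (Set.mem_Ioi.2 (lt_of_lt_of_le hx hxy)) hxy
    · intro x y hx hxy
      have : ∀ w : ℝ, L w z / LB k w z = UB k w z := fun w => rfl
      rw [this, this]
      exact hUBanti (Set.mem_Ioi.2 hx) (Set.mem_Ioi.2 (lt_of_lt_of_le hx hxy)) hxy
    · intro x hx
      rw [(LB_hasDerivAt hz hx).deriv]
      have h1 := hu x hx
      have h2 := hxu x hx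
      have h3 := hQ0 x hx
      have h4 := hQP x hx
      have h5 := hP1 x hx
      have hLpos : (0:ℝ) < L x z := by linarith [hL1 x hx]
      set Q := Qf k ((1/2 : ℝ) * Real.log (L x z)) with hQdef
      set P := LB k x z with hPdef
      have hA : x * (Q * ((1/2) * (-(x * (x+1))⁻¹ / L x z)))
          = -(Q / 2) * ((x * (x * (x+1))⁻¹) / L x z) := by ring
      rw [hA]
      rw [abs_le]
      have hfrac : 0 ≤ (x * (x * (x+1))⁻¹) / L x z := by positivity
      have hfrac1 : (x * (x * (x+1))⁻¹) / L x z ≤ 1 := by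
        rw [div_le_one hLpos]; linarith [hL1 x hx]
      constructor <;> nlinarith
  · refine ⟨fun x hx => hUB1 x hx, ?_, ?_, ?_⟩
    · intro x y hx hxy
      exact hUBanti (Set.mem_Ioi.2 hx) (Set.mem_Ioi.2 (lt_of_lt_of_le hx hxy)) hxy
    · intro x y hx hxy
      have hy : 0 < y := lt_of_lt_of_le hx hxy
      have key : ∀ w : ℝ, 0 < w → L w z / UB k w z = LB k w z := by
        intro w hw
        have hLpos : (0:ℝ) < L w z := by linarith [hL1 w hw]
        have hPpos : (0:ℝ) < LB k w z := by linarith [hP1 w hw]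
        rw [UB]
        field_simp
      rw [key x hx, key y hy]
      exact hLBanti (Set.mem_Ioi.2 hx) (Set.mem_Ioi.2 hy) hxy
    · intro x hx
      rw [(UB_hasDerivAt hk hz hx).deriv]
      have h1 := hu x hx
      have h2 := hxu x hx
      have h3 := hQ0 x hx
      have h4 := hQP x hx
      have h5 := hP1 x hx
      have h6 := hPL x hx
      have hLpos : (0:ℝ) < L x z := by linarith [hL1 x hx]
      have hPpos : (0:ℝ) < LB k x z := by linarith
      set Q := Qf k ((1/2 : ℝ) * Real.log (L x z)) with hQdef
      set P := LB k x z with hPdef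
      have hA : x * ((-(x * (x+1))⁻¹ * P -
          L x z * (Q * ((1/2) * (-(x * (x+1))⁻¹ / L x z)))) / P^2)
          = -(x * (x * (x+1))⁻¹) * ((P - Q/2) / P^2) := by
        field_simp
        ring
      rw [hA]
      have hUBval : UB k x z = L x z / P := rfl
      show |UB k x z + -(x * (x * (x+1))⁻¹) * ((P - Q/2) / P^2)| ≤ 2 * UB k x z
      rw [hUBval, abs_le]
      have hnum0 : 0 ≤ P - Q/2 := by linarith
      have hfr0 : 0 ≤ (P - Q/2) / P^2 := by positivity
      have hfr1 : (P - Q/2) / P^2 ≤ 1 / P := by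
        rw [div_le_div_iff₀ (by positivity) hPpos]
        nlinarith
      have hinvP : 1 / P ≤ L x z / P := by
        gcongr
        linarith [hL1 x hx]
      have hLP1 : 1 ≤ L x z / P := by
        rw [le_div_iff₀ hPpos]; linarith
      have hxufr : 0 ≤ x * (x * (x+1))⁻¹ := by positivity
      have hab : x * (x * (x+1))⁻¹ * ((P - Q/2) / P^2) ≤ 1 / P :=
        le_trans (mul_le_of_le_one_left hfr0 h2) hfr1
      have hab0 : 0 ≤ x * (x * (x+1))⁻¹ * ((P - Q/2) / P^2) := mul_nonneg hxufr hfr0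
      constructor <;> nlinarith
end

section
/- Let n ≥ 1 be an integer, let σ : (ℝ²)^{n+1} → [0,∞) be measurable and symmetric under permutations of its n+1 ℝ²-arguments, and let ψ : (ℝ²)^n → ℂ be measurable and symmetric under permutations of its n ℝ²-arguments. Assume that the function (p₁,…,p_{n+1}) ↦ ∏_{i=1}^{n+1} (V̂(p_i)/|p_i|²) · σ(p₁,…,p_{n+1}) · ( Σ_{i=1}^{n+1} |ψ(p₁,…,p̂_i,…,p_{n+1})| · |p_i × Σ_{j≠i} p_j| )² is Lebesgue integrable on (ℝ²)^{n+1}, where p̂_i means the argument p_i is omitted. Then (n!/(n+1)) · ∫_{(ℝ²)^{n+1}} ∏_{i=1}^{n+1} (V̂(p_i)/|p_i|²) · σ(p₁,…,p_{n+1}) · | Σ_{i=1}^{n+1} ψ(p₁,…,p̂_i,…,p_{n+1}) · (p_i × Σ_{j≠i} p_j) |² dp₁…dp_{n+1} = n! · ∫_{(ℝ²)^{n+1}} ∏_{j=1}^{n+1} (V̂(p_j)/|p_j|²) · |ψ(p₁,…,p_n)|² · σ(p₁,…,p_{n+1}) · (p_{n+1} × Σ_{j=1}^{n} p_j)² dp₁…dp_{n+1}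 + n!·n · ∫_{(ℝ²)^{n+1}} ∏_{j=1}^{n+1} (V̂(p_j)/|p_j|²) · Re[ conj(ψ(p₁,…,p_n)) · ψ(p₁,…,p_{n−1},p_{n+1}) ] · σ(p₁,…,p_{n+1}) · (p_{n+1} × Σ_{i=1}^{n+1} p_i) · (p_n × Σ_{i=1}^{n+1} p_i) dp₁…dp_{n+1}. -/
open MeasureTheory Real

abbrev R2 := EuclideanSpace ℝ (Fin 2)

/-- the planar "cross product" `a × b = a₁ b₂ − a₂ b₁`. -/
def cross (a b : R2) : ℝ := a 0 * b 1 - a 1 * b 0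

/-- `V` is a bump function in the sense of Assumption 2.1: `V = U ⋆ U` for a smooth,
radially symmetric `U` decaying exponentially fast at infinity with total integral 1. -/
def IsBump (V : R2 → ℝ) : Prop :=
  ∃ U : R2 → ℝ, ContDiff ℝ (⊤ : ℕ∞) U ∧
    (∀ x y : R2, ‖x‖ = ‖y‖ → U x = U y) ∧
    (∃ C c : ℝ, 0 < c ∧ ∀ x : R2, |U x| ≤ C * Real.exp (-c * ‖x‖)) ∧
    (∫ x : R2, U x) = 1 ∧
    V = fun x => ∫ y : R2, U y * U (x - y)

/-- `Vhat` is the Fourier transform of `V`. -/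
def IsFT (V Vhat : R2 → ℝ) : Prop :=
  ∀ q : R2, (Vhat q : ℂ) = FourierTransform.fourier (fun x : R2 => (V x : ℂ)) q

lemma measurable_Vhat (V Vhat : R2 → ℝ) (hV : IsBump V) (hVhat : IsFT V Vhat) :
    Measurable Vhat := by
  obtain ⟨U, hU, -, -, -, hVdef⟩ := hV
  have hUc : Continuous U := hU.continuous
  have hVsm : StronglyMeasurable V := by
    rw [hVdef]
    exact StronglyMeasurable.integral_prod_right'
      (f := fun z : R2 × R2 => U z.2 * U (z.1 - z.2))
      (((hUc.comp continuous_snd).mul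
        (hUc.comp (continuous_fst.sub continuous_snd))).stronglyMeasurable)
  have hFT : StronglyMeasurable fun q : R2 =>
      FourierTransform.fourier (fun x : R2 => (V x : ℂ)) q := by
    have : StronglyMeasurable fun z : R2 × R2 =>
        (Real.fourierChar (-(inner ℝ z.2 z.1 : ℝ)) : Circle) • ((V z.2 : ℂ)) := by
      apply StronglyMeasurable.smul
      · exact (continuous_subtype_val.comp (Real.continuous_fourierChar.comp
          ((continuous_inner (𝕜 := ℝ) (E := R2)).comp
            (continuous_snd.prodMk continuous_fst)).neg)).stronglyMeasurable
      · exact (Complex.continuous_ofReal.comp_stronglyMeasurable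
          (hVsm.comp_measurable measurable_snd))
    simpa only [Real.fourier_eq] using this.integral_prod_right'
  have : Vhat = fun q => (FourierTransform.fourier (fun x : R2 => (V x : ℂ)) q).re := by
    funext q
    rw [← hVhat q, Complex.ofReal_re]
  rw [this]
  exact Complex.measurable_re.comp hFT.measurable

lemma cross_sub_self (a s : R2) : cross a (s - a) = cross a s := by
  simp only [cross, PiLp.sub_apply]; ring

lemma sum_erase_eq (N : ℕ) (p : Fin N → R2) (i : Fin N) :
    ∑ j ∈ Finset.univ.erase i, p j = (∑ j, p j) - p i := by
  rw [eq_sub_iff_add_eq, add_comm]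
  exact Finset.add_sum_erase _ _ (Finset.mem_univ i)

lemma succAbove_perm {n : ℕ} (e : Equiv.Perm (Fin (n+1))) (i : Fin (n+1)) :
    ∃ τ : Equiv.Perm (Fin n), ∀ j, e (i.succAbove j) = (e i).succAbove (τ j) := by
  refine ⟨(finSuccAboveEquiv i).trans ((e.subtypeEquiv (q := fun x => x ≠ e i)
    (fun a => by simp)).trans (finSuccAboveEquiv (e i)).symm), fun j => ?_⟩
  have h : ∀ x : {x : Fin (n+1) // x ≠ e i},
      (e i).succAbove ((finSuccAboveEquiv (e i)).symm x) = x := by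
    intro x
    have := (finSuccAboveEquiv (e i)).apply_symm_apply x
    rw [finSuccAboveEquiv_apply] at this
    exact congrArg Subtype.val this
  simp only [Equiv.trans_apply, finSuccAboveEquiv_apply, Equiv.subtypeEquiv_apply]
  rw [h]

lemma integral_comp_perm {N : ℕ} (e : Equiv.Perm (Fin N)) (h : (Fin N → R2) → ℝ) :
    ∫ p : Fin N → R2, h (fun a => p (e a)) = ∫ p : Fin N → R2, h p := by
  have hco : ∀ p : Fin N → R2,
      (MeasurableEquiv.piCongrLeft (fun _ => R2) e.symm) p = fun a => p (e a) := by
    intro p; funext a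
    conv_lhs => rw [show a = e.symm (e a) by simp]
    exact Equiv.piCongrLeft_apply_apply (fun _ => R2) e.symm p (e a)
  have := (volume_measurePreserving_piCongrLeft (fun _ : Fin N => R2) e.symm).integral_comp' h
  simp_rw [hco] at this
  exact this

lemma re_conj_mul (w w' : ℂ) (c c' : ℝ) :
    ((starRingEnd ℂ) (w * (c : ℂ)) * (w' * (c' : ℂ))).re
      = ((starRingEnd ℂ) w * w').re * (c * c') := by
  simp only [map_mul, Complex.conj_ofReal, Complex.mul_re, Complex.mul_im, Complex.conj_re,
    Complex.conj_im, Complex.ofReal_re, Complex.ofReal_im]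
  ring

lemma re_conj_mul_self (w : ℂ) (c : ℝ) :
    ((starRingEnd ℂ) (w * (c : ℂ)) * (w * (c : ℂ))).re = ‖w‖ ^ 2 * c ^ 2 := by
  simp only [map_mul, Complex.conj_ofReal, Complex.mul_re, Complex.mul_im, Complex.conj_re,
    Complex.conj_im, Complex.ofReal_re, Complex.ofReal_im, Complex.sq_norm,
    Complex.normSq_apply]
  ring

lemma norm_sq_eq_re_conj_mul (z : ℂ) : ‖z‖ ^ 2 = ((starRingEnd ℂ) z * z).re := by
  simp only [Complex.mul_re, Complex.conj_re, Complex.conj_im,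
    Complex.sq_norm, Complex.normSq_apply]
  ring

section Aux

variable {n : ℕ}

noncomputable def Ff (Vhat : R2 → ℝ) (σ : (Fin (n + 1) → R2) → ℝ) (p : Fin (n + 1) → R2) : ℝ :=
  (∏ i, Vhat (p i) / ‖p i‖ ^ 2) * σ p

def gg (ψ : (Fin n → R2) → ℂ) (i : Fin (n + 1)) (p : Fin (n + 1) → R2) : ℂ :=
  ψ (fun j => p (i.succAbove j)) *
    ((cross (p i) (∑ j ∈ Finset.univ.erase i, p j) : ℝ) : ℂ)

noncomputable def TT (Vhat : R2 → ℝ) (σ : (Fin (n + 1) → R2) → ℝ) (ψ : (Fin n → R2) → ℂ)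
    (i k : Fin (n + 1)) (p : Fin (n + 1) → R2) : ℝ :=
  Ff Vhat σ p * ((starRingEnd ℂ) (gg ψ i p) * gg ψ k p).re

lemma Ff_comp (Vhat : R2 → ℝ) (σ : (Fin (n + 1) → R2) → ℝ)
    (hσsymm : ∀ (e : Equiv.Perm (Fin (n + 1))) (p : Fin (n + 1) → R2), σ (p ∘ e) = σ p)
    (e : Equiv.Perm (Fin (n + 1))) (p : Fin (n + 1) → R2) :
    Ff Vhat σ (fun a => p (e a)) = Ff Vhat σ p := by
  simp only [Ff]
  rw [show σ (fun a => p (e a)) = σ p from hσsymm e p,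
    Equiv.prod_comp e (fun a => Vhat (p a) / ‖p a‖ ^ 2)]

lemma gg_comp (ψ : (Fin n → R2) → ℂ)
    (hψsymm : ∀ (e : Equiv.Perm (Fin n)) (p : Fin n → R2), ψ (p ∘ e) = ψ p)
    (e : Equiv.Perm (Fin (n + 1))) (i : Fin (n + 1)) (p : Fin (n + 1) → R2) :
    gg ψ i (fun a => p (e a)) = gg ψ (e i) p := by
  obtain ⟨τ, hτ⟩ := succAbove_perm e i
  simp only [gg]
  have h1 : (fun j => p (e (i.succAbove j))) = (fun j => p ((e i).succAbove j)) ∘ τ := by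
    funext j; simp [hτ j]
  have h2 : ∑ j ∈ Finset.univ.erase i, p (e j) = ∑ j ∈ Finset.univ.erase (e i), p j := by
    rw [sum_erase_eq, sum_erase_eq, Equiv.sum_comp e p]
  rw [h1, hψsymm τ, h2]

lemma TT_comp (Vhat : R2 → ℝ) (σ : (Fin (n + 1) → R2) → ℝ) (ψ : (Fin n → R2) → ℂ)
    (hσsymm : ∀ (e : Equiv.Perm (Fin (n + 1))) (p : Fin (n + 1) → R2), σ (p ∘ e) = σ p)
    (hψsymm : ∀ (e : Equiv.Perm (Fin n)) (p : Fin n → R2), ψ (p ∘ e) = ψ p)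
    (e : Equiv.Perm (Fin (n + 1))) (i k : Fin (n + 1)) (p : Fin (n + 1) → R2) :
    TT Vhat σ ψ i k (fun a => p (e a)) = TT Vhat σ ψ (e i) (e k) p := by
  simp only [TT, Ff_comp Vhat σ hσsymm e p, gg_comp ψ hψsymm e i p, gg_comp ψ hψsymm e k p]

lemma integral_TT_comp (Vhat : R2 → ℝ) (σ : (Fin (n + 1) → R2) → ℝ) (ψ : (Fin n → R2) → ℂ)
    (hσsymm : ∀ (e : Equiv.Perm (Fin (n + 1))) (p : Fin (n + 1) → R2), σ (p ∘ e) = σ p)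
    (hψsymm : ∀ (e : Equiv.Perm (Fin n)) (p : Fin n → R2), ψ (p ∘ e) = ψ p)
    (e : Equiv.Perm (Fin (n + 1))) (i k : Fin (n + 1)) :
    ∫ p, TT Vhat σ ψ (e i) (e k) p = ∫ p, TT Vhat σ ψ i k p := by
  have : ∀ p : Fin (n + 1) → R2,
      TT Vhat σ ψ (e i) (e k) p = TT Vhat σ ψ i k (fun a => p (e a)) :=
    fun p => (TT_comp Vhat σ ψ hσsymm hψsymm e i k p).symm
  simp_rw [this]
  exact integral_comp_perm e (TT Vhat σ ψ i k)

end Aux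

theorem stmt_12 (V Vhat : R2 → ℝ) (hV : IsBump V) (hVhat : IsFT V Vhat)
    (n : ℕ) (hn : 1 ≤ n)
    (σ : (Fin (n + 1) → R2) → ℝ) (hσmeas : Measurable σ) (hσ0 : ∀ p, 0 ≤ σ p)
    (hσsymm : ∀ (e : Equiv.Perm (Fin (n + 1))) (p : Fin (n + 1) → R2), σ (p ∘ e) = σ p)
    (ψ : (Fin n → R2) → ℂ) (hψmeas : Measurable ψ)
    (hψsymm : ∀ (e : Equiv.Perm (Fin n)) (p : Fin n → R2), ψ (p ∘ e) = ψ p)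
    (hint : Integrable (fun p : Fin (n + 1) → R2 =>
      (∏ i, Vhat (p i) / ‖p i‖ ^ 2) * σ p *
        (∑ i, ‖ψ (fun j => p (i.succAbove j))‖ *
          |cross (p i) (∑ j ∈ Finset.univ.erase i, p j)|) ^ 2)) :
    ((n.factorial : ℝ) / (n + 1)) *
      (∫ p : Fin (n + 1) → R2,
        (∏ i, Vhat (p i) / ‖p i‖ ^ 2) * σ p *
          ‖∑ i, ψ (fun j => p (i.succAbove j)) *
            ((cross (p i) (∑ j ∈ Finset.univ.erase i, p j) : ℝ) : ℂ)‖ ^ 2)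
    = (n.factorial : ℝ) *
        (∫ p : Fin (n + 1) → R2,
          (∏ j, Vhat (p j) / ‖p j‖ ^ 2) * ‖ψ (fun j : Fin n => p j.castSucc)‖ ^ 2 *
            σ p * (cross (p (Fin.last n)) (∑ j : Fin n, p j.castSucc)) ^ 2)
      + (n.factorial : ℝ) * n *
        (∫ p : Fin (n + 1) → R2,
          (∏ j, Vhat (p j) / ‖p j‖ ^ 2) *
            ((starRingEnd ℂ) (ψ (fun j : Fin n => p j.castSucc)) *
              ψ (fun j : Fin n => p ((⟨n - 1, by omega⟩ : Fin (n + 1)).succAbove j))).re *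
            σ p * (cross (p (Fin.last n)) (∑ i, p i)) *
            (cross (p (⟨n - 1, by omega⟩ : Fin (n + 1))) (∑ i, p i))) := by
  classical
  have hVm : Measurable Vhat := measurable_Vhat V Vhat hV hVhat
  set m : Fin (n + 1) := ⟨n - 1, by omega⟩ with hmdef
  -- measurability
  have hFm : Measurable (Ff Vhat σ) := by
    refine Measurable.mul ?_ hσmeas
    refine Finset.measurable_prod _ fun i _ => ?_
    exact (hVm.comp (measurable_pi_apply i)).div ((measurable_pi_apply i).norm.pow_const 2)
  have hev : ∀ k : Fin 2, Measurable fun v : R2 => v k := fun k => (PiLp.proj 2 (𝕜 := ℝ) (fun _ : Fin 2 => ℝ) k).continuous.measurable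
  have hgm : ∀ i, Measurable (gg ψ i) := by
    intro i
    refine Measurable.mul ?_ ?_
    · exact hψmeas.comp (measurable_pi_lambda _ fun j => measurable_pi_apply _)
    · refine Complex.measurable_ofReal.comp ?_
      have hsum : Measurable fun p : Fin (n + 1) → R2 => ∑ j ∈ Finset.univ.erase i, p j :=
        Finset.measurable_sum _ fun j _ => measurable_pi_apply j
      simp only [cross]
      exact (((hev 0).comp (measurable_pi_apply i)).mul ((hev 1).comp hsum)).sub
        (((hev 1).comp (measurable_pi_apply i)).mul ((hev 0).comp hsum))
  have hTm : ∀ i k, Measurable (TT Vhat σ ψ i k) := by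
    intro i k
    exact hFm.mul (Complex.measurable_re.comp ((continuous_star.measurable.comp (hgm i)).mul (hgm k)))
  -- integrability
  have hint' : Integrable (fun p : Fin (n + 1) → R2 =>
      Ff Vhat σ p * (∑ i, ‖gg ψ i p‖) ^ 2) := by
    have heq : (fun p : Fin (n + 1) → R2 =>
        (∏ i, Vhat (p i) / ‖p i‖ ^ 2) * σ p *
          (∑ i, ‖ψ (fun j => p (i.succAbove j))‖ *
            |cross (p i) (∑ j ∈ Finset.univ.erase i, p j)|) ^ 2)
        = fun p => Ff Vhat σ p * (∑ i, ‖gg ψ i p‖) ^ 2 := by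
      funext p
      simp only [Ff, gg, norm_mul, Complex.norm_real, Real.norm_eq_abs]
    rw [← heq]; exact hint
  have hTint : ∀ i k, Integrable (TT Vhat σ ψ i k) := by
    intro i k
    refine hint'.abs.mono' (hTm i k).aestronglyMeasurable
      (Filter.Eventually.of_forall fun p => ?_)
    have h2 : |((starRingEnd ℂ) (gg ψ i p) * gg ψ k p).re|
        ≤ (∑ i', ‖gg ψ i' p‖) ^ 2 := by
      calc |((starRingEnd ℂ) (gg ψ i p) * gg ψ k p).re|
          ≤ ‖(starRingEnd ℂ) (gg ψ i p) * gg ψ k p‖ := by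
            exact Complex.abs_re_le_norm _
        _ = ‖gg ψ i p‖ * ‖gg ψ k p‖ := by rw [norm_mul, RCLike.norm_conj]
        _ ≤ (∑ i', ‖gg ψ i' p‖) * (∑ i', ‖gg ψ i' p‖) := by
            refine mul_le_mul ?_ ?_ (norm_nonneg _) ?_
            · exact Finset.single_le_sum (f := fun i' => ‖gg ψ i' p‖)
                (fun _ _ => norm_nonneg _) (Finset.mem_univ i)
            · exact Finset.single_le_sum (f := fun i' => ‖gg ψ i' p‖)
                (fun _ _ => norm_nonneg _) (Finset.mem_univ k)
            · exact Finset.sum_nonneg fun _ _ => norm_nonneg _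
        _ = (∑ i', ‖gg ψ i' p‖) ^ 2 := (sq _).symm
    calc ‖TT Vhat σ ψ i k p‖
        = |Ff Vhat σ p| * |((starRingEnd ℂ) (gg ψ i p) * gg ψ k p).re| := by
          rw [Real.norm_eq_abs, TT, abs_mul]
      _ ≤ |Ff Vhat σ p| * (∑ i', ‖gg ψ i' p‖) ^ 2 :=
          mul_le_mul_of_nonneg_left h2 (abs_nonneg _)
      _ = |Ff Vhat σ p * (∑ i', ‖gg ψ i' p‖) ^ 2| := by
          rw [abs_mul, abs_of_nonneg (sq_nonneg (∑ i', ‖gg ψ i' p‖))]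
  -- key pointwise identity
  have key : ∀ p : Fin (n + 1) → R2,
      Ff Vhat σ p * ‖∑ i, gg ψ i p‖ ^ 2 = ∑ i, ∑ k, TT Vhat σ ψ i k p := by
    intro p
    rw [norm_sq_eq_re_conj_mul, map_sum, Finset.sum_mul_sum]
    simp only [Complex.re_sum, Finset.mul_sum, TT]
  -- abbreviations
  set A := ∫ p, TT Vhat σ ψ (Fin.last n) (Fin.last n) p with hAdef
  set B := ∫ p, TT Vhat σ ψ (Fin.last n) m p with hBdef
  have hm_ne_last : m ≠ Fin.last n := by
    intro h
    have := congrArg Fin.val h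
    simp only [hmdef, Fin.last] at this
    omega
  have hdiag : ∀ i, ∫ p, TT Vhat σ ψ i i p = A := by
    intro i
    have := integral_TT_comp Vhat σ ψ hσsymm hψsymm (Equiv.swap (Fin.last n) i)
      (Fin.last n) (Fin.last n)
    rwa [Equiv.swap_apply_left] at this
  have hoff : ∀ i k, i ≠ k → ∫ p, TT Vhat σ ψ i k p = B := by
    intro i k hik
    have hx : (Equiv.swap (Fin.last n) i).symm k ≠ Fin.last n := by
      intro h
      have h2 := congrArg (Equiv.swap (Fin.last n) i) h
      rw [Equiv.apply_symm_apply, Equiv.swap_apply_left] at h2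
      exact hik h2.symm
    have helast : ((Equiv.swap m ((Equiv.swap (Fin.last n) i).symm k)).trans
        (Equiv.swap (Fin.last n) i)) (Fin.last n) = i := by
      rw [Equiv.trans_apply, Equiv.swap_apply_of_ne_of_ne hm_ne_last.symm (Ne.symm hx),
        Equiv.swap_apply_left]
    have hem : ((Equiv.swap m ((Equiv.swap (Fin.last n) i).symm k)).trans
        (Equiv.swap (Fin.last n) i)) m = k := by
      rw [Equiv.trans_apply, Equiv.swap_apply_left, Equiv.apply_symm_apply]
    have := integral_TT_comp Vhat σ ψ hσsymm hψsymm
      ((Equiv.swap m ((Equiv.swap (Fin.last n) i).symm k)).trans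
        (Equiv.swap (Fin.last n) i)) (Fin.last n) m
    rwa [helast, hem] at this
  have hcount : ∑ i, ∑ k, ∫ p, TT Vhat σ ψ i k p = ((n : ℝ) + 1) * (A + n * B) := by
    have h1 : ∀ i : Fin (n + 1), ∑ k, ∫ p, TT Vhat σ ψ i k p = A + n * B := by
      intro i
      rw [← Finset.add_sum_erase _ _ (Finset.mem_univ i)]
      congr 1
      · exact hdiag i
      · rw [Finset.sum_congr rfl fun k hk => hoff i k (Finset.ne_of_mem_erase hk).symm,
          Finset.sum_const, Finset.card_erase_of_mem (Finset.mem_univ i), Finset.card_univ]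
        simp [Fintype.card_fin, nsmul_eq_mul]
    rw [Finset.sum_congr rfl fun i _ => h1 i, Finset.sum_const, Finset.card_univ]
    simp only [Fintype.card_fin, nsmul_eq_mul]
    push_cast
    ring
  have hL : (∫ p : Fin (n + 1) → R2,
      (∏ i, Vhat (p i) / ‖p i‖ ^ 2) * σ p *
        ‖∑ i, ψ (fun j => p (i.succAbove j)) *
          ((cross (p i) (∑ j ∈ Finset.univ.erase i, p j) : ℝ) : ℂ)‖ ^ 2)
      = ∑ i, ∑ k, ∫ p, TT Vhat σ ψ i k p := by
    have h0 : (fun p : Fin (n + 1) → R2 =>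
        (∏ i, Vhat (p i) / ‖p i‖ ^ 2) * σ p *
          ‖∑ i, ψ (fun j => p (i.succAbove j)) *
            ((cross (p i) (∑ j ∈ Finset.univ.erase i, p j) : ℝ) : ℂ)‖ ^ 2)
        = fun p => Ff Vhat σ p * ‖∑ i, gg ψ i p‖ ^ 2 := rfl
    rw [h0]
    simp_rw [key]
    rw [integral_finset_sum _ fun i _ => integrable_finset_sum _ fun k _ => hTint i k]
    exact Finset.sum_congr rfl fun i _ => integral_finset_sum _ fun k _ => hTint i k
  have hA : A = ∫ p : Fin (n + 1) → R2,
      (∏ j, Vhat (p j) / ‖p j‖ ^ 2) * ‖ψ (fun j : Fin n => p j.castSucc)‖ ^ 2 *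
        σ p * (cross (p (Fin.last n)) (∑ j : Fin n, p j.castSucc)) ^ 2 := by
    rw [hAdef]
    congr 1
    funext p
    simp only [TT, Ff, gg]
    have e1 : (fun j : Fin n => p ((Fin.last n).succAbove j)) = fun j => p j.castSucc := by
      funext j; rw [Fin.succAbove_last]
    have e2 : ∑ j ∈ Finset.univ.erase (Fin.last n), p j = ∑ j : Fin n, p j.castSucc := by
      rw [sum_erase_eq, Fin.sum_univ_castSucc, add_sub_cancel_right]
    rw [e1, e2, re_conj_mul_self]
    ring
  have hB : B = ∫ p : Fin (n + 1) → R2,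
      (∏ j, Vhat (p j) / ‖p j‖ ^ 2) *
        ((starRingEnd ℂ) (ψ (fun j : Fin n => p j.castSucc)) *
          ψ (fun j : Fin n => p (m.succAbove j))).re *
        σ p * (cross (p (Fin.last n)) (∑ i, p i)) *
        (cross (p m) (∑ i, p i)) := by
    rw [hBdef]
    congr 1
    funext p
    simp only [TT, Ff, gg]
    have e1 : (fun j : Fin n => p ((Fin.last n).succAbove j)) = fun j => p j.castSucc := by
      funext j; rw [Fin.succAbove_last]
    have e3 : ∀ i : Fin (n + 1), cross (p i) (∑ j ∈ Finset.univ.erase i, p j)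
        = cross (p i) (∑ j, p j) := by
      intro i; rw [sum_erase_eq]; exact cross_sub_self _ _
    rw [e1, e3 (Fin.last n), e3 m, re_conj_mul]
    ring
  rw [hL, hcount, ← hA, ← hB]
  have hne : (n : ℝ) + 1 ≠ 0 := by positivity
  field_simp
end

section
/- Let (a_k)_{k≥1} be a sequence with 0 ≤ a_k < 1 for all k and Σ_{k≥1} a_k < ∞. Define c₁ = 1 and, recursively for k ≥ 1, c_{2k} = (2π/c_{2k−1})·(1 + a_k) and c_{2k+1} = (2π/c_{2k})·(1 − a_k). Then c_j > 0 for every j ≥ 1, and the limits lim_{j→∞} c_{2j} and lim_{j→∞} c_{2j+1} exist, are finite and strictly positive, with (lim_{j→∞} c_{2j})·(lim_{j→∞} c_{2j+1}) = 2π. -/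
open Real Filter

theorem stmt_17 (a : ℕ → ℝ) (ha : ∀ k : ℕ, 1 ≤ k → 0 ≤ a k ∧ a k < 1)
    (hsum : Summable a) (c : ℕ → ℝ) (hc1 : c 1 = 1)
    (hrec : ∀ k : ℕ, 1 ≤ k →
      c (2 * k) = (2 * π / c (2 * k - 1)) * (1 + a k) ∧
      c (2 * k + 1) = (2 * π / c (2 * k)) * (1 - a k)) :
    (∀ j : ℕ, 1 ≤ j → 0 < c j) ∧
    ∃ A B : ℝ, 0 < A ∧ 0 < B ∧
      Tendsto (fun j : ℕ => c (2 * j)) atTop (nhds A) ∧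
      Tendsto (fun j : ℕ => c (2 * j + 1)) atTop (nhds B) ∧
      A * B = 2 * π := by
  have hπ : (0:ℝ) < 2 * π := by positivity
  -- positivity of c
  have pos : ∀ j : ℕ, 1 ≤ j → 0 < c j := by
    intro j
    induction j using Nat.strong_induction_on with
    | _ j ih =>
      intro hj
      rcases Nat.even_or_odd j with ⟨k, hk⟩ | ⟨k, hk⟩
      · have hk1 : 1 ≤ k := by omega
        have hj2 : j = 2 * k := by omega
        subst hj2
        have hprev : 0 < c (2 * k - 1) := ih (2 * k - 1) (by omega) (by omega)
        have haK := (ha k hk1).1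
        rw [(hrec k hk1).1]
        exact mul_pos (div_pos hπ hprev) (by linarith)
      · rcases Nat.eq_zero_or_pos k with hk0 | hk1
        · subst hk0; simp only [hk] ; simpa using hc1.symm ▸ one_pos
        · have hj2 : j = 2 * k + 1 := by omega
          subst hj2
          have hprev : 0 < c (2 * k) := ih (2 * k) (by omega) (by omega)
          have haK := (ha k hk1).2
          rw [(hrec k hk1).2]
          exact mul_pos (div_pos hπ hprev) (by linarith)
  refine ⟨pos, ?_⟩
  set g : ℕ → ℝ := fun k => (1 - a k) / (1 + a k) with hg
  have gpos : ∀ k, 1 ≤ k → 0 < g k := by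
    intro k hk
    have h1 := (ha k hk).1
    have h2 := (ha k hk).2
    exact div_pos (by linarith) (by linarith)
  -- step recurrence for odd terms
  have hstep : ∀ k : ℕ, 1 ≤ k → c (2 * k + 1) = c (2 * k - 1) * g k := by
    intro k hk
    obtain ⟨h1, h2⟩ := hrec k hk
    have hprev : 0 < c (2 * k - 1) := pos (2 * k - 1) (by omega)
    have ha1 := (ha k hk).1
    rw [h2, h1, hg]
    field_simp
  -- product formula
  have hprod : ∀ k : ℕ, c (2 * k + 1) = ∏ i ∈ Finset.range k, g (i + 1) := by
    intro k
    induction k with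
    | zero => simpa using hc1
    | succ k ihk =>
      have h := hstep (k + 1) (by omega)
      have he : 2 * (k + 1) - 1 = 2 * k + 1 := by omega
      rw [Finset.prod_range_succ, ← ihk]
      rw [h, he]
  -- summability of logs
  set f : ℕ → ℝ := fun i => Real.log (g (i + 1)) with hf
  have ha0 : Tendsto a atTop (nhds 0) := hsum.tendsto_atTop_zero
  obtain ⟨N, hN⟩ := eventually_atTop.1 (ha0.eventually (eventually_le_nhds (by norm_num : (0:ℝ) < 1/2)))
  have hfs : Summable f := by
    rw [← summable_nat_add_iff N]
    have habs : Summable (fun n => |f (n + N)|) := by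
      apply Summable.of_nonneg_of_le (f := fun n => 3 * a (n + N + 1))
        (fun n => abs_nonneg _)
      · intro n
        set x := a (n + N + 1) with hx
        have hx1 : 0 ≤ x := (ha _ (by omega)).1
        have hx2 : x ≤ 1/2 := hN (n + N + 1) (by omega)
        have hgx : g (n + N + 1) = (1 - x) / (1 + x) := rfl
        have h1x : (0:ℝ) < 1 - x := by linarith
        have h1x' : (0:ℝ) < 1 + x := by linarith
        have hlog : f (n + N) = Real.log (1 - x) - Real.log (1 + x) := by
          simp only [hf, hgx]
          rw [Real.log_div (by linarith) (by linarith)]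
        rw [hlog]
        have hb1 : Real.log (1 + x) ≤ x := by
          have := Real.log_le_sub_one_of_pos h1x'
          linarith
        have hb1' : 0 ≤ Real.log (1 + x) := Real.log_nonneg (by linarith)
        have hb2 : -Real.log (1 - x) ≤ 2 * x := by
          have h := Real.log_le_sub_one_of_pos (inv_pos.2 h1x)
          rw [Real.log_inv] at h
          have hinv : (1 - x) * (1 - x)⁻¹ = 1 := mul_inv_cancel₀ (ne_of_gt h1x)
          have hipos : 0 < (1 - x)⁻¹ := inv_pos.2 h1x
          nlinarith [mul_nonneg hx1 hipos.le]
        have hb2' : Real.log (1 - x) ≤ 0 := Real.log_nonpos (by linarith) (by linarith)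
        rw [abs_le]
        constructor <;> nlinarith
      · exact (((summable_nat_add_iff (N + 1)).2 hsum).mul_left 3).congr
          (fun n => by ring_nf)
    exact summable_abs_iff.1 habs
  -- limit of odd terms
  have hS := hfs.hasSum.tendsto_sum_nat
  set S : ℝ := ∑' i, f i with hSdef
  set B : ℝ := Real.exp S with hB
  have hBpos : 0 < B := Real.exp_pos S
  have hodd : Tendsto (fun k : ℕ => c (2 * k + 1)) atTop (nhds B) := by
    have heq : ∀ k : ℕ, c (2 * k + 1) = Real.exp (∑ i ∈ Finset.range k, f i) := by
      intro k
      rw [hprod k]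
      rw [Real.exp_sum]
      exact Finset.prod_congr rfl fun i _ => (Real.exp_log (gpos (i + 1) (by omega))).symm
    simp only [heq]
    exact (Real.continuous_exp.tendsto S).comp hS
  -- limit of even terms
  have htail : Tendsto (fun k : ℕ => c (2 * (k - 1) + 1)) atTop (nhds B) :=
    hodd.comp (tendsto_sub_atTop_nat 1)
  have haT : Tendsto (fun k : ℕ => a k) atTop (nhds 0) := ha0
  have heven : Tendsto (fun k : ℕ => c (2 * k)) atTop (nhds (2 * π / B)) := by
    have h2 : Tendsto (fun k : ℕ => 2 * π / c (2 * (k - 1) + 1) * (1 + a k)) atTop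
        (nhds (2 * π / B * (1 + 0))) :=
      (tendsto_const_nhds.div htail (ne_of_gt hBpos)).mul
        (tendsto_const_nhds.add haT)
    rw [add_zero, mul_one] at h2
    apply h2.congr'
    filter_upwards [eventually_ge_atTop 1] with k hk
    have he : 2 * (k - 1) + 1 = 2 * k - 1 := by omega
    rw [he, ← (hrec k hk).1]
  refine ⟨2 * π / B, B, div_pos hπ hBpos, hBpos, heven, hodd, ?_⟩
  field_simp
end

section
/- There exists a constant C > 0 such that for every z ≥ 1 and every a > 0, one has ∫_0^a du / ( √u · (z + log(1 + u))^{3/2} ) ≤ C·√a / (z + log(1 + a))^{3/2}. -/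
open Real MeasureTheory

lemma aux_log_bound : (34:ℝ)/33 ≤ Real.log (100/33) := by
  rw [Real.le_log_iff_exp_le (by norm_num)]
  have h1 : Real.exp (34/33 : ℝ) = Real.exp 1 * Real.exp (1/33) := by
    rw [← Real.exp_add]; norm_num
  have h2 : Real.exp (1/33 : ℝ) ≤ 33/32 := by
    have h := Real.add_one_le_exp (-(1/33) : ℝ)
    rw [Real.exp_neg] at h
    have hpos : 0 < Real.exp (1/33 : ℝ) := Real.exp_pos _
    rw [le_inv_comm₀ (by norm_num) hpos] at h
    linarith
  have h3 : Real.exp 1 ≤ 2.7182818286 := le_of_lt Real.exp_one_lt_d9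
  have hp : 0 < Real.exp (1/33 : ℝ) := Real.exp_pos _
  rw [h1]
  nlinarith [Real.exp_pos (1:ℝ)]

lemma aux_key (z u : ℝ) (hz : 1 ≤ z) (hu : 0 < u) :
    300 * u ≤ 99 * (1 + u) * (z + Real.log (1 + u)) := by
  set L := Real.log (1 + u) with hLdef
  set v := z + L with hvdef
  have h1u : (0:ℝ) < 1 + u := by linarith
  have hL : 0 ≤ L := Real.log_nonneg (by linarith)
  have hv1 : 1 ≤ v := by simp only [hvdef]; linarith
  have hinv : (1 + u)⁻¹ = Real.exp (-L) := by
    rw [Real.exp_neg, Real.exp_log h1u]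
  have he : Real.exp (1 - v) ≤ Real.exp (-L) := by
    apply Real.exp_le_exp.2
    simp only [hvdef]; linarith
  have hlow : 1 - (33/100) * v ≤ Real.exp (1 - v) := by
    have hd1 : Real.exp (1 - v) = (33/100) * Real.exp (1 - v + Real.log (100/33)) := by
      rw [Real.exp_add, Real.exp_log (by norm_num : (0:ℝ) < 100/33)]; ring
    have hd2 : (1 - v + Real.log (100/33)) + 1 ≤ Real.exp (1 - v + Real.log (100/33)) :=
      Real.add_one_le_exp _
    have hd3 := aux_log_bound
    nlinarith
  have hcore : (1:ℝ) - (33/100) * v ≤ (1 + u)⁻¹ := by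
    rw [hinv]; linarith
  have hinvmul : (1 + u) * (1 + u)⁻¹ = 1 := mul_inv_cancel₀ (ne_of_gt h1u)
  nlinarith [mul_le_mul_of_nonneg_left hcore (le_of_lt h1u)]

theorem stmt_18 :
    ∃ C : ℝ, 0 < C ∧ ∀ z : ℝ, 1 ≤ z → ∀ a : ℝ, 0 < a →
      (∫ u in Set.Ioc (0 : ℝ) a,
          1 / (Real.sqrt u * (z + Real.log (1 + u)) ^ (3 / 2 : ℝ))) ≤
        C * Real.sqrt a / (z + Real.log (1 + a)) ^ (3 / 2 : ℝ) := by
  refine ⟨200, by norm_num, ?_⟩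
  intro z hz a ha
  have hvpos : ∀ x : ℝ, 0 ≤ x → 0 < z + Real.log (1 + x) := by
    intro x hx
    have : 0 ≤ Real.log (1 + x) := Real.log_nonneg (by linarith)
    linarith
  have hv1 : ∀ x : ℝ, 0 ≤ x → 1 ≤ z + Real.log (1 + x) := by
    intro x hx
    have : 0 ≤ Real.log (1 + x) := Real.log_nonneg (by linarith)
    linarith
  set f : ℝ → ℝ := fun u => 1 / (Real.sqrt u * (z + Real.log (1 + u)) ^ (3 / 2 : ℝ)) with hf
  set F : ℝ → ℝ := fun u => 200 * Real.sqrt u / (z + Real.log (1 + u)) ^ (3 / 2 : ℝ) with hF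
  set G : ℝ → ℝ := fun u =>
    (200 * (1 / (2 * Real.sqrt u)) * (z + Real.log (1 + u)) ^ (3 / 2 : ℝ)
      - 200 * Real.sqrt u *
        (1 / (1 + u) * (3 / 2) * (z + Real.log (1 + u)) ^ (3 / 2 - 1 : ℝ)))
      / ((z + Real.log (1 + u)) ^ (3 / 2 : ℝ)) ^ 2 with hG
  -- continuity of F on [0, a]
  have hcont : ContinuousOn F (Set.Icc 0 a) := by
    apply ContinuousOn.div
    · exact (continuous_const.mul Real.continuous_sqrt).continuousOn
    · apply ContinuousOn.rpow_const
      · apply ContinuousOn.add continuousOn_const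
        apply ContinuousOn.log
        · exact (continuous_const.add continuous_id).continuousOn
        · intro x hx
          have : (0:ℝ) ≤ x := hx.1
          intro h; linarith [h]
      · intro x hx
        right; norm_num
    · intro x hx
      exact (Real.rpow_pos_of_pos (hvpos x hx.1) _).ne'
  -- derivative of F on (0, a)
  have hderiv : ∀ x ∈ Set.Ioo (0:ℝ) a, HasDerivWithinAt F (G x) (Set.Ioi x) x := by
    intro x hx
    have hx0 : 0 < x := hx.1
    have h1x : (0:ℝ) < 1 + x := by linarith
    have hv : 0 < z + Real.log (1 + x) := hvpos x hx0.le
    have hsq : HasDerivAt (fun u : ℝ => 200 * Real.sqrt u) (200 * (1 / (2 * Real.sqrt x))) x :=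
      (Real.hasDerivAt_sqrt hx0.ne').const_mul 200
    have h0 : HasDerivAt (fun u : ℝ => 1 + u) 1 x := by
      simpa using (hasDerivAt_id x).const_add 1
    have hlog : HasDerivAt (fun u : ℝ => z + Real.log (1 + u)) (1 / (1 + x)) x := by
      have hl := h0.log h1x.ne'
      simpa using hl.const_add z
    have hpow : HasDerivAt (fun u : ℝ => (z + Real.log (1 + u)) ^ (3 / 2 : ℝ))
        (1 / (1 + x) * (3 / 2) * (z + Real.log (1 + x)) ^ (3 / 2 - 1 : ℝ)) x :=
      hlog.rpow_const (Or.inl hv.ne')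
    have hdA : HasDerivAt F (G x) x := hsq.div hpow (Real.rpow_pos_of_pos hv _).ne'
    exact hdA.hasDerivWithinAt
  -- integrability of f on [0, a]
  have hfint : IntegrableOn f (Set.Icc 0 a) := by
    rw [integrableOn_Icc_iff_integrableOn_Ioc]
    have hg : IntegrableOn (fun u : ℝ => u ^ (-(1/2) : ℝ)) (Set.Ioc 0 a) := by
      have h := intervalIntegral.intervalIntegrable_rpow' (a := 0) (b := a)
        (r := -(1/2)) (by norm_num)
      rwa [intervalIntegrable_iff, Set.uIoc_of_le ha.le] at h
    apply MeasureTheory.Integrable.mono hg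
    · apply ContinuousOn.aestronglyMeasurable _ measurableSet_Ioc
      apply ContinuousOn.div continuousOn_const
      · apply ContinuousOn.mul Real.continuous_sqrt.continuousOn
        apply ContinuousOn.rpow_const
        · apply ContinuousOn.add continuousOn_const
          apply ContinuousOn.log
          · exact (continuous_const.add continuous_id).continuousOn
          · intro x hx
            have : (0:ℝ) < x := hx.1
            intro h; linarith [h]
        · intro x hx; right; norm_num
      · intro x hx
        have hsx : 0 < Real.sqrt x := Real.sqrt_pos.2 hx.1
        have hvx : 0 < (z + Real.log (1 + x)) ^ (3/2 : ℝ) :=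
          Real.rpow_pos_of_pos (hvpos x hx.1.le) _
        exact (mul_pos hsx hvx).ne'
    · filter_upwards [ae_restrict_mem measurableSet_Ioc] with x hx
      have hx0 : 0 < x := hx.1
      have hv : 1 ≤ z + Real.log (1 + x) := hv1 x hx0.le
      have hvp : (1:ℝ) ≤ (z + Real.log (1 + x)) ^ (3/2 : ℝ) := by
        calc (1:ℝ) = (1:ℝ) ^ (3/2 : ℝ) := (Real.one_rpow _).symm
          _ ≤ (z + Real.log (1 + x)) ^ (3/2 : ℝ) :=
            Real.rpow_le_rpow (by norm_num) hv (by norm_num)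
      have hs : 0 < Real.sqrt x := Real.sqrt_pos.2 hx0
      have hxr : x ^ (-(1/2) : ℝ) = 1 / Real.sqrt x := by
        rw [Real.rpow_neg hx0.le, Real.sqrt_eq_rpow]
        exact (one_div _).symm
      rw [Real.norm_eq_abs, Real.norm_eq_abs]
      rw [abs_of_nonneg (by positivity), abs_of_nonneg (by positivity)]
      rw [hxr]
      apply div_le_div_of_nonneg_left (by norm_num) hs
      nlinarith
  -- pointwise bound f ≤ G on (0, a)
  have hle : ∀ x ∈ Set.Ioo (0:ℝ) a, f x ≤ G x := by
    intro x hx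
    have hx0 : 0 < x := hx.1
    have h1x : (0:ℝ) < 1 + x := by linarith
    have hv0 : 0 < z + Real.log (1 + x) := hvpos x hx0.le
    have hvv1 : 1 ≤ z + Real.log (1 + x) := hv1 x hx0.le
    set v := z + Real.log (1 + x) with hvdef
    set s := Real.sqrt x with hsdef
    have hs : 0 < s := Real.sqrt_pos.2 hx0
    have hs2 : s ^ 2 = x := Real.sq_sqrt hx0.le
    set W := v ^ (1/2 : ℝ) with hWdef
    have hW : 0 < W := Real.rpow_pos_of_pos hv0 _
    have h32 : v ^ (3/2 : ℝ) = v * W := by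
      rw [hWdef, show (3/2:ℝ) = 1 + 1/2 by norm_num, Real.rpow_add hv0, Real.rpow_one]
    have h12 : v ^ (3/2 - 1 : ℝ) = W := by
      rw [hWdef]; norm_num
    have hww : W * W = v := by
      rw [hWdef, ← Real.rpow_add hv0]; norm_num
    have hkey := aux_key z x hz hx0
    show 1 / (s * v ^ (3/2 : ℝ)) ≤
      (200 * (1 / (2 * s)) * v ^ (3/2 : ℝ)
          - 200 * s * (1/(1+x) * (3/2) * v ^ (3/2 - 1 : ℝ)))
        / (v ^ (3/2 : ℝ)) ^ 2
    rw [h32, h12]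
    rw [div_le_div_iff₀ (by positivity) (by positivity)]
    have e1 : (200 * (1 / (2 * s)) * (v * W) - 200 * s * (1/(1+x) * (3/2) * W)) * (s * (v * W))
        = 100 * v^2 * W^2 - 300 * s^2 * v * W^2 / (1 + x) := by
      field_simp
      ring
    rw [e1]
    have hW2 : W^2 = v := by rw [sq]; exact hww
    have e2 : 300 * s^2 * v * W^2 / (1 + x) ≤ 99 * v^2 * W^2 := by
      rw [hs2, div_le_iff₀ h1x, hW2]
      calc 300 * x * v * v = 300 * x * v^2 := by ring
        _ ≤ 99 * (1 + x) * v * v^2 := by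
            apply mul_le_mul_of_nonneg_right hkey
            positivity
        _ = 99 * v^2 * v * (1 + x) := by ring
    have e3 : (1:ℝ) * (v * W)^2 = v^2 * W^2 := by ring
    linarith [e2, e3]
  -- assemble
  have hFTC : (∫ u in (0:ℝ)..a, f u) ≤ F a - F 0 :=
    intervalIntegral.integral_le_sub_of_hasDeriv_right_of_le ha.le hcont hderiv hfint hle
  have h0a : (∫ u in Set.Ioc (0:ℝ) a, f u) = ∫ u in (0:ℝ)..a, f u :=
    (intervalIntegral.integral_of_le ha.le).symm
  have hF0 : F 0 = 0 := by simp [hF]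
  have hFa : F a = 200 * Real.sqrt a / (z + Real.log (1 + a)) ^ (3/2 : ℝ) := rfl
  calc (∫ u in Set.Ioc (0:ℝ) a, f u) = ∫ u in (0:ℝ)..a, f u := h0a
    _ ≤ F a - F 0 := hFTC
    _ = 200 * Real.sqrt a / (z + Real.log (1 + a)) ^ (3/2 : ℝ) := by rw [hF0, hFa]; ring
end

section
/- Let f : (0,∞) → (0,∞) be differentiable with 0 > f'(x) > −f(x)/x for every x > 0, and let a > 0 and b ≥ 0. Then the function r ↦ 1 / ( r² · f(a + (b + r)²) ) is strictly decreasing on (0,∞). -/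
theorem stmt_19 (f f' : ℝ → ℝ)
    (hderiv : ∀ x : ℝ, 0 < x → HasDerivAt f (f' x) x)
    (hpos : ∀ x : ℝ, 0 < x → 0 < f x)
    (hf' : ∀ x : ℝ, 0 < x → f' x < 0 ∧ -(f x / x) < f' x)
    (a b : ℝ) (ha : 0 < a) (hb : 0 ≤ b) :
    StrictAntiOn (fun r : ℝ => 1 / (r ^ 2 * f (a + (b + r) ^ 2))) (Set.Ioi 0) := by
  have hupos : ∀ r : ℝ, 0 < a + (b + r) ^ 2 := fun r => by positivity
  have hgd : ∀ r : ℝ, HasDerivAt (fun r => r ^ 2 * f (a + (b + r) ^ 2))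
      (2 * r * f (a + (b + r) ^ 2) +
        r ^ 2 * (f' (a + (b + r) ^ 2) * (2 * (b + r)))) r := by
    intro r
    have h1 : HasDerivAt (fun r : ℝ => r ^ 2) (2 * r) r := by
      simpa using (hasDerivAt_pow 2 r)
    have h2 : HasDerivAt (fun r : ℝ => a + (b + r) ^ 2) (2 * (b + r)) r := by
      have hb' : HasDerivAt (fun r : ℝ => b + r) 1 r := (hasDerivAt_id r).const_add b
      have := (hb'.pow 2).const_add a
      simpa using this
    have h3 : HasDerivAt (fun r => f (a + (b + r) ^ 2))
        (f' (a + (b + r) ^ 2) * (2 * (b + r))) r :=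
      (hderiv _ (hupos r)).comp r h2
    exact h1.mul h3
  have hg : StrictMonoOn (fun r : ℝ => r ^ 2 * f (a + (b + r) ^ 2)) (Set.Ioi 0) := by
    apply strictMonoOn_of_deriv_pos (convex_Ioi 0)
    · exact fun r _ => (hgd r).continuousAt.continuousWithinAt
    · intro r hr
      rw [interior_Ioi] at hr
      rw [(hgd r).deriv]
      obtain ⟨hneg, hlb⟩ := hf' _ (hupos r)
      have hfu := hpos _ (hupos r)
      have key : -(f (a + (b + r) ^ 2)) <
          f' (a + (b + r) ^ 2) * (a + (b + r) ^ 2) := by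
        have h := hlb
        rw [neg_div'] at h
        exact (div_lt_iff₀ (hupos r)).mp h
      have hr' : 0 < r := Set.mem_Ioi.mp hr
      have h1 : f' (a + (b + r) ^ 2) * (a + b * (b + r)) < 0 :=
        mul_neg_of_neg_of_pos hneg (by nlinarith)
      have h2 : 0 < f (a + (b + r) ^ 2) + r * (b + r) * f' (a + (b + r) ^ 2) := by
        nlinarith [key, h1]
      nlinarith [mul_pos hr' h2]
  intro x hx y hy hxy
  have hgx : 0 < x ^ 2 * f (a + (b + x) ^ 2) :=
    mul_pos (pow_pos hx 2) (hpos _ (hupos x))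
  exact one_div_lt_one_div_of_lt hgx (hg hx hy hxy)
end
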